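/- Let α ∈ (0, 1) ∪ (1, ∞), let A be a density matrix in ℂ^{d×d}, and let U, V be positive definite Hermitian matrices in ℂ^{d×d}. Then | log Tr[A^α U^{1−α}] − log Tr[A^α V^{1−α}] | ≤ d_T( V^{1−α}, U^{1−α} ). -/

import Mathlib

open scoped ComplexOrder
open Matrix

noncomputable section

/-- Real power of a matrix via the functional calculus (spectral decomposition);
junk value `A` if `A` is not Hermitian. -/
noncomputable def mpow {d : ℕ} (A : Matrix (Fin d) (Fin d) ℂ) (r : ℝ) :
    Matrix (Fin d) (Fin d) ℂ :=
  if hA : A.IsHermitian then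
    (hA.eigenvectorUnitary : Matrix (Fin d) (Fin d) ℂ) *
      Matrix.diagonal (fun i => ((hA.eigenvalues i ^ r : ℝ) : ℂ)) *
      star (hA.eigenvectorUnitary : Matrix (Fin d) (Fin d) ℂ)
  else A

/-- The Loewner order: `A ⪯ B` iff `B - A` is positive semidefinite. -/
def loewnerLE {d : ℕ} (A B : Matrix (Fin d) (Fin d) ℂ) : Prop := (B - A).PosSemidef

/-- Thompson metric on positive definite matrices (extended-real valued):
`inf { r ≥ 0 | exp (-r) • V ⪯ U ⪯ exp r • V }`, equal to `⊤` if no such `r` exists. -/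
noncomputable def dTmat {d : ℕ} (V U : Matrix (Fin d) (Fin d) ℂ) : EReal :=
  sInf {x : EReal | ∃ r : ℝ, 0 ≤ r ∧ x = (r : EReal) ∧
    loewnerLE (Real.exp (-r) • V) U ∧ loewnerLE U (Real.exp r • V)}

open Classical in
/-- Thompson metric on entrywise-positive vectors (extended-real valued):
`max_i |log (v i / u i)|`. -/
noncomputable def dTvec {d : ℕ} (v u : Fin d → ℝ) : EReal :=
  (⨆ i, if 0 < v i ∧ 0 < u i then ((|Real.log (v i / u i)| : ℝ) : EReal) else (⊤ : EReal)) ⊔ 0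

/-- A density matrix: Hermitian positive semidefinite with unit trace. -/
def IsDensityMatrix {d : ℕ} (A : Matrix (Fin d) (Fin d) ℂ) : Prop :=
  A.PosSemidef ∧ A.trace = 1

/-- The operator `T_F (U) = (∑ j, w j • A j ^ α / Tr[A j ^ α * U]) ^ ((1 - α)/α)`. -/
noncomputable def TF {n d : ℕ} (w : Fin n → ℝ) (A : Fin n → Matrix (Fin d) (Fin d) ℂ)
    (α : ℝ) (U : Matrix (Fin d) (Fin d) ℂ) : Matrix (Fin d) (Fin d) ℂ :=
  mpow (∑ j, ((w j : ℂ) / Matrix.trace (mpow (A j) α * U)) • mpow (A j) α) ((1 - α) / α)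

/-- The Petz–Rényi divergence of order `α` (real-valued version, intended for
positive definite `Q`): `(α - 1)⁻¹ * log Tr[A^α * Q^(1-α)]`. -/
noncomputable def petzRenyi {d : ℕ} (α : ℝ) (A Q : Matrix (Fin d) (Fin d) ℂ) : ℝ :=
  (α - 1)⁻¹ * Real.log (Matrix.trace (mpow A α * mpow Q (1 - α))).re

open Classical in
/-- The Petz–Rényi divergence of order `α`, extended-real valued; `⊤` whenever the
defining formula is not well-defined. -/
noncomputable def petzRenyiE {d : ℕ} (α : ℝ) (A Q : Matrix (Fin d) (Fin d) ℂ) : EReal :=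
  if 0 < (Matrix.trace (mpow A α * mpow Q (1 - α))).re ∧
      (1 < α → ∀ x : Fin d → ℂ, Q.mulVec x = 0 → A.mulVec x = 0) then
    (((α - 1)⁻¹ * Real.log (Matrix.trace (mpow A α * mpow Q (1 - α))).re : ℝ) : EReal)
  else ⊤

/-- The objective `F(Q) = ∑ j, w j * D_α(A j ‖ Q)`, extended-real valued. -/
noncomputable def FE {n d : ℕ} (w : Fin n → ℝ) (A : Fin n → Matrix (Fin d) (Fin d) ℂ)
    (α : ℝ) (Q : Matrix (Fin d) (Fin d) ℂ) : EReal :=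
  ∑ j, ((w j : ℝ) : EReal) * petzRenyiE α (A j) Q

/-- Membership in the probability simplex `Δ_d`. -/
def memSimplex {d : ℕ} (q : Fin d → ℝ) : Prop := (∀ i, 0 ≤ q i) ∧ ∑ i, q i = 1

/-- The classical operator `T_f (u) = (∑ j, w j • a j ^ α / ⟨a j ^ α, u⟩) ^ ((1 - α)/α)`,
entrywise. -/
noncomputable def Tf {n d : ℕ} (w : Fin n → ℝ) (a : Fin n → Fin d → ℝ) (α : ℝ)
    (u : Fin d → ℝ) : Fin d → ℝ :=
  fun i => (∑ j, w j * (a j i ^ α) / (∑ k, (a j k ^ α) * u k)) ^ ((1 - α) / α)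

open Classical in
/-- The classical Rényi divergence term, extended-real valued; `⊤` whenever the
defining formula is not well-defined. -/
noncomputable def petzVecE {d : ℕ} (α : ℝ) (a q : Fin d → ℝ) : EReal :=
  if 0 < (∑ i, a i ^ α * q i ^ (1 - α)) ∧ (1 < α → ∀ i, q i = 0 → a i = 0) then
    (((α - 1)⁻¹ * Real.log (∑ i, a i ^ α * q i ^ (1 - α)) : ℝ) : EReal)
  else ⊤

/-- The classical objective `f(q) = ∑ j, w j * (α-1)⁻¹ * log (∑ i, (a j i)^α * (q i)^(1-α))`,
real-valued version (intended for entrywise positive `q`). -/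
noncomputable def fcl {n d : ℕ} (w : Fin n → ℝ) (a : Fin n → Fin d → ℝ) (α : ℝ)
    (q : Fin d → ℝ) : ℝ :=
  ∑ j, w j * ((α - 1)⁻¹ * Real.log (∑ i, a j i ^ α * q i ^ (1 - α)))

/-- Total CES demand in a Fisher market at prices `p`. -/
noncomputable def demand {n d : ℕ} (w : Fin n → ℝ) (a : Fin n → Fin d → ℝ)
    (ρ : Fin n → ℝ) (p : Fin d → ℝ) : Fin d → ℝ :=
  fun i => ∑ j, w j * (a j i ^ (1 / (1 - ρ j)) * p i ^ (-(1 / (1 - ρ j)))) /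
    (∑ k, a j k ^ (1 / (1 - ρ j)) * p k ^ (-(ρ j / (1 - ρ j))))


/-! The map `M ↦ Re Tr[A^α M]` is monotone for the Loewner order, positively homogeneous, and
strictly positive on positive definite matrices because `A^α` is positive semidefinite and
nonzero. Hence `e^{-r} V' ⪯ U' ⪯ e^r V'` (with `U' = U^{1-α}`, `V' = V^{1-α}`) gives
`e^{-r} Tr[A^α V'] ≤ Tr[A^α U'] ≤ e^r Tr[A^α V']`, and taking logarithms bounds the difference
by `r`. -/

open scoped MatrixOrder

namespace Matrix

variable {n : Type*} [Fintype n] [DecidableEq n]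

lemma PosSemidef.trace_mul_nonneg {X M : Matrix n n ℂ} (hX : X.PosSemidef) (hM : M.PosSemidef) :
    0 ≤ (X * M).trace := by
  have hS : (CFC.sqrt M).IsHermitian := (CFC.sqrt_nonneg M).posSemidef.isHermitian
  rw [← CFC.sqrt_mul_sqrt_self M hM.nonneg, ← mul_assoc, trace_mul_cycle]
  simpa [hS.eq] using (hX.mul_mul_conjTranspose_same (CFC.sqrt M)).trace_nonneg

lemma PosSemidef.trace_mul_pos {X M : Matrix n n ℂ} (hX : X.PosSemidef) (hX0 : X ≠ 0)
    (hM : M.PosDef) : 0 < (X * M).trace := by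
  have hS : (CFC.sqrt M).IsHermitian := (CFC.sqrt_nonneg M).posSemidef.isHermitian
  have hu : IsUnit (CFC.sqrt M) := hM.isStrictlyPositive.isUnit_cfcSqrt
  have hconj := hX.mul_mul_conjTranspose_same (CFC.sqrt M)
  rw [hS.eq] at hconj
  rw [← CFC.sqrt_mul_sqrt_self M hM.posSemidef.nonneg, ← mul_assoc, trace_mul_cycle]
  refine lt_of_le_of_ne hconj.trace_nonneg (Ne.symm ?_)
  rwa [Ne, hconj.trace_eq_zero_iff, hu.mul_left_eq_zero, hu.mul_right_eq_zero]

lemma PosSemidef.trace_mul_mono {X M N : Matrix n n ℂ} (hX : X.PosSemidef) (hMN : M ≤ N) :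
    (X * M).trace ≤ (X * N).trace := by
  rw [← sub_nonneg, ← trace_sub, ← mul_sub]
  exact hX.trace_mul_nonneg (sub_nonneg.mpr hMN).posSemidef

omit [DecidableEq n] in
lemma re_trace_mul_real_smul (X M : Matrix n n ℂ) (c : ℝ) :
    (X * (c • M)).trace.re = c * (X * M).trace.re := by
  simp [Matrix.mul_smul, trace_smul]

end Matrix

lemma Real.abs_log_sub_log_le_of_le_exp_mul {a b r : ℝ} (ha : 0 < a) (hb : 0 < b)
    (hab : a ≤ exp r * b) (hba : b ≤ exp r * a) : |log a - log b| ≤ r := by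
  have hlog : ∀ {x y : ℝ}, 0 < x → 0 < y → x ≤ exp r * y → log x ≤ r + log y := fun hx hy h => by
    simpa [log_mul (exp_pos r).ne' hy.ne'] using log_le_log hx h
  rw [abs_sub_le_iff]
  constructor <;> linarith [hlog ha hb hab, hlog hb ha hba]

section

variable {d : ℕ}

lemma mpow_eq_cfc {A : Matrix (Fin d) (Fin d) ℂ} (hA : A.IsHermitian) (r : ℝ) :
    mpow A r = cfc (· ^ r : ℝ → ℝ) A := by
  rw [hA.cfc_eq, IsHermitian.cfc, Unitary.conjStarAlgAut_apply, mpow, dif_pos hA]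
  rfl

lemma mpow_posSemidef {A : Matrix (Fin d) (Fin d) ℂ} (hA : A.PosSemidef) (r : ℝ) :
    (mpow A r).PosSemidef := by
  rw [mpow_eq_cfc hA.isHermitian]
  exact (cfc_nonneg fun x hx =>
    Real.rpow_nonneg (spectrum_nonneg_of_nonneg hA.nonneg hx) r).posSemidef

lemma mpow_posDef {A : Matrix (Fin d) (Fin d) ℂ} (hA : A.PosDef) (r : ℝ) :
    (mpow A r).PosDef := by
  rw [mpow_eq_cfc hA.isHermitian]
  refine ((cfc_isStrictlyPositive_iff _ A (A.finite_real_spectrum.continuousOn _)).mpr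
    fun x hx => Real.rpow_pos_of_pos ?_ r).posDef
  exact (StarOrderedRing.isStrictlyPositive_iff_spectrum_pos A).mp hA.isStrictlyPositive x hx

lemma mpow_ne_zero {A : Matrix (Fin d) (Fin d) ℂ} (hA : A.PosSemidef) (hA0 : A ≠ 0) (r : ℝ) :
    mpow A r ≠ 0 := by
  rw [mpow_eq_cfc hA.isHermitian]
  intro h
  refine hA0 (CFC.eq_zero_of_spectrum_subset_zero (R := ℝ) A fun x hx => ?_)
  have hx0 : x ^ r ∈ spectrum ℝ (0 : Matrix (Fin d) (Fin d) ℂ) := by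
    rw [← h, cfc_map_spectrum (fun x : ℝ => x ^ r) A (hf := A.finite_real_spectrum.continuousOn _)]
    exact ⟨x, hx, rfl⟩
  have hzero : spectrum ℝ (0 : Matrix (Fin d) (Fin d) ℂ) ⊆ {0} := by
    simpa using CFC.spectrum_algebraMap_subset (R := ℝ) (A := Matrix (Fin d) (Fin d) ℂ) 0
  exact ((Real.rpow_eq_zero_iff_of_nonneg (spectrum_nonneg_of_nonneg hA.nonneg hx)).mp
    (hzero hx0)).1

theorem abs_log_re_trace_mul_sub_le_dTmat {X P Q : Matrix (Fin d) (Fin d) ℂ}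
    (hX : X.PosSemidef) (hX0 : X ≠ 0) (hP : P.PosDef) (hQ : Q.PosDef) :
    ((|Real.log (X * P).trace.re - Real.log (X * Q).trace.re| : ℝ) : EReal) ≤ dTmat Q P := by
  have hmono : ∀ {M N}, loewnerLE M N → (X * M).trace.re ≤ (X * N).trace.re :=
    fun h => (Complex.le_def.mp (hX.trace_mul_mono h)).1
  refine le_sInf ?_
  rintro _ ⟨r, -, rfl, hlo, hhi⟩
  have hQP : (X * Q).trace.re ≤ Real.exp r * (X * P).trace.re := by
    have := hmono hlo
    rwa [re_trace_mul_real_smul, Real.exp_neg, inv_mul_le_iff₀ (Real.exp_pos r)] at this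
  have hPQ : (X * P).trace.re ≤ Real.exp r * (X * Q).trace.re := by
    simpa only [re_trace_mul_real_smul] using hmono hhi
  exact EReal.coe_le_coe_iff.mpr <| Real.abs_log_sub_log_le_of_le_exp_mul
    (Complex.pos_iff.mp (hX.trace_mul_pos hX0 hP)).1
    (Complex.pos_iff.mp (hX.trace_mul_pos hX0 hQ)).1 hPQ hQP

end

theorem log_trace_thompson_bound_general {d : ℕ} (α : ℝ)
    (A : Matrix (Fin d) (Fin d) ℂ) (hA : IsDensityMatrix A)
    (U V : Matrix (Fin d) (Fin d) ℂ) (hU : U.PosDef) (hV : V.PosDef) :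
    ((|Real.log (Matrix.trace (mpow A α * mpow U (1 - α))).re -
        Real.log (Matrix.trace (mpow A α * mpow V (1 - α))).re| : ℝ) : EReal) ≤
      dTmat (mpow V (1 - α)) (mpow U (1 - α)) := by
  have hA0 : A ≠ 0 := fun h => by simpa [h] using hA.2
  exact abs_log_re_trace_mul_sub_le_dTmat (mpow_posSemidef hA.1 α) (mpow_ne_zero hA.1 hA0 α)
    (mpow_posDef hU _) (mpow_posDef hV _)

/-- `|log Tr[A^α U^(1-α)] - log Tr[A^α V^(1-α)]| ≤ d_T(V^(1-α), U^(1-α))`. -/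
theorem log_trace_thompson_bound {d : ℕ} (α : ℝ)
    (hα : α ∈ Set.Ioo (0 : ℝ) 1 ∪ Set.Ioi (1 : ℝ))
    (A : Matrix (Fin d) (Fin d) ℂ) (hA : IsDensityMatrix A)
    (U V : Matrix (Fin d) (Fin d) ℂ) (hU : U.PosDef) (hV : V.PosDef) :
    ((|Real.log (Matrix.trace (mpow A α * mpow U (1 - α))).re -
        Real.log (Matrix.trace (mpow A α * mpow V (1 - α))).re| : ℝ) : EReal) ≤
      dTmat (mpow V (1 - α)) (mpow U (1 - α)) :=
  log_trace_thompson_bound_general α A hA U V hU hV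

end
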